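/- arXiv:1202.3981 — 3 statements merged into one kernel-verified Lean document; each statement's English description precedes it below -/
import Mathlib

section
/- For every nonnegative integer n, ∑_{k=0}^{n} (1/(k+1))·H_{n-k} = H_{n+1}² − H_{n+1}^{(2)}. -/
open Finset

/-- The harmonic number `H n = ∑_{k=1}^n 1/k`. -/
def H (n : ℕ) : ℚ := ∑ k ∈ Finset.range n, (1 : ℚ) / ((k : ℚ) + 1)

/-- The generalized harmonic number `H n ^ (m) = ∑_{k=1}^n 1/k^m`. -/
def Hgen (m n : ℕ) : ℚ := ∑ k ∈ Finset.range n, (1 : ℚ) / ((k : ℚ) + 1) ^ m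

/-! Induction on `n`: with the convolution written as a sum over `i + j = n`, its increment is
`∑_{i+j=n} 1/((i+1)(j+1))`, which partial fractions turn into `2 H_{n+1}/(n+2)`; this is also the
increment of `H_{n+1}² − H_{n+1}^{(2)}`. -/

lemma H_zero : H 0 = 0 := rfl

lemma H_succ (n : ℕ) : H (n + 1) = H n + 1 / ((n : ℚ) + 1) := sum_range_succ _ _

lemma Hgen_succ (m n : ℕ) : Hgen m (n + 1) = Hgen m n + 1 / ((n : ℚ) + 1) ^ m :=
  sum_range_succ _ _

lemma sum_antidiagonal_one_div_fst (n : ℕ) :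
    ∑ p ∈ antidiagonal n, 1 / ((p.1 : ℚ) + 1) = H (n + 1) :=
  Nat.sum_antidiagonal_eq_sum_range_succ (fun i _ => 1 / ((i : ℚ) + 1)) n

lemma one_div_mul_one_div_of_add_eq {i j n : ℕ} (h : i + j = n) :
    1 / ((i : ℚ) + 1) * (1 / ((j : ℚ) + 1)) =
      (1 / ((i : ℚ) + 1) + 1 / ((j : ℚ) + 1)) / ((n : ℚ) + 2) := by
  subst h
  push_cast
  field_simp
  ring

lemma sum_antidiagonal_one_div_mul_one_div (n : ℕ) :
    ∑ p ∈ antidiagonal n, 1 / ((p.1 : ℚ) + 1) * (1 / ((p.2 : ℚ) + 1)) =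
      2 * H (n + 1) / ((n : ℚ) + 2) := by
  have hsnd : ∑ p ∈ antidiagonal n, 1 / ((p.2 : ℚ) + 1) = H (n + 1) := by
    rw [← sum_antidiagonal_one_div_fst n, ← Nat.sum_antidiagonal_swap]
    rfl
  rw [sum_congr rfl fun p hp => one_div_mul_one_div_of_add_eq (mem_antidiagonal.mp hp),
    ← sum_div, sum_add_distrib, sum_antidiagonal_one_div_fst, hsnd, two_mul]

lemma sum_antidiagonal_one_div_mul_H (n : ℕ) :
    ∑ p ∈ antidiagonal n, 1 / ((p.1 : ℚ) + 1) * H p.2 = H (n + 1) ^ 2 - Hgen 2 (n + 1) := by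
  induction n with
  | zero => simp [H, Hgen]
  | succ n ih =>
    have hstep : ∑ p ∈ antidiagonal n, 1 / ((p.1 : ℚ) + 1) * H (p.2 + 1) =
        ∑ p ∈ antidiagonal n, 1 / ((p.1 : ℚ) + 1) * H p.2 + 2 * H (n + 1) / ((n : ℚ) + 2) := by
      simp only [H_succ, mul_add, sum_add_distrib, sum_antidiagonal_one_div_mul_one_div]
    rw [Nat.sum_antidiagonal_succ', H_zero, mul_zero, zero_add, hstep, ih,
      H_succ (n + 1), Hgen_succ 2 (n + 1)]
    push_cast
    field_simp
    ring

theorem stmt3 (n : ℕ) :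
    ∑ k ∈ Finset.range (n + 1), (1 : ℚ) / ((k : ℚ) + 1) * H (n - k) =
      (H (n + 1)) ^ 2 - Hgen 2 (n + 1) := by
  rw [← Nat.sum_antidiagonal_eq_sum_range_succ (fun i j => 1 / ((i : ℚ) + 1) * H j)]
  exact sum_antidiagonal_one_div_mul_H n
end

section
/- For every nonnegative integer n, ∑_{k=0}^{n} k⁴·H_k·H_{n-k} = (n(n+1)(2n+1)(3n²+3n−1)/30)·[H_{n+1}² − H_{n+1}^{(2)}] − (1/900)·n(n+1)(447n³+468n²+17n−32)·H_{n+1} + (1/54000)·n(n+1)(20739n³+33066n²+4129n−3934). -/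
/-!
Write `S n` for the left-hand side. Since `H (n + 1 - k) - H (n - k) = 1 / (n + 1 - k)`, the
difference `S (n + 1) - S n` is `∑_{k ≤ n} k⁴ H_k / (n + 1 - k)`. Dividing `k⁴` by `(n + 1) - k`
leaves the remainder `(n + 1)⁴`, so this difference reduces to the convolution
`∑_{k ≤ n} H_k / (n + 1 - k) = H_{n+1}² - H_{n+1}^{(2)}` and to the moments `∑ k^p H_k` for `p ≤ 3`,
which have closed forms; the identity then follows by induction on `n`. The convolution is proved by
the same differencing, with partial fractions `1 / ((k + 1)(n + 1 - k))` for the increment.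
-/

open Finset

lemma cast_succ_sub_ne_zero {k n : ℕ} (hk : k ≤ n) : (n : ℚ) + 1 - k ≠ 0 := by
  have : (k : ℚ) ≤ n := by exact_mod_cast hk
  linarith

lemma H_succ_sub {k n : ℕ} (hk : k ≤ n) :
    H (n + 1 - k) = H (n - k) + 1 / ((n : ℚ) + 1 - k) := by
  rw [Nat.sub_add_comm hk, H_succ, Nat.cast_sub hk]
  ring_nf

lemma sum_H (n : ℕ) : ∑ k ∈ range n, H k = n * H n - n := by
  induction n with
  | zero => simp
  | succ n ih => rw [sum_range_succ, ih, H_succ]; push_cast; field_simp; ring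

lemma sum_mul_H (n : ℕ) : ∑ k ∈ range n, (k : ℚ) * H k =
    n * (n - 1) / 2 * H n - n * (n - 1) / 4 := by
  induction n with
  | zero => simp
  | succ n ih => rw [sum_range_succ, ih, H_succ]; push_cast; field_simp; ring

lemma sum_sq_mul_H (n : ℕ) : ∑ k ∈ range n, (k : ℚ) ^ 2 * H k =
    n * (n - 1) * (2 * n - 1) / 6 * H n - n * (n - 1) * (4 * n + 1) / 36 := by
  induction n with
  | zero => simp
  | succ n ih => rw [sum_range_succ, ih, H_succ]; push_cast; field_simp; ring

lemma sum_cube_mul_H (n : ℕ) : ∑ k ∈ range n, (k : ℚ) ^ 3 * H k =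
    (n * (n - 1) / 2) ^ 2 * H n - n * (n - 1) * (n + 1) * (3 * n - 2) / 48 := by
  induction n with
  | zero => simp
  | succ n ih => rw [sum_range_succ, ih, H_succ]; push_cast; field_simp; ring

lemma sum_mul_H_succ_sub (f : ℕ → ℚ) (n : ℕ) :
    ∑ k ∈ range (n + 1 + 1), f k * H (n + 1 - k) =
      ∑ k ∈ range (n + 1), f k * H (n - k) + ∑ k ∈ range (n + 1), f k / ((n : ℚ) + 1 - k) := by
  rw [sum_range_succ, Nat.sub_self, H_zero, mul_zero, add_zero, ← sum_add_distrib]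
  refine sum_congr rfl fun k hk => ?_
  rw [H_succ_sub (Nat.lt_succ_iff.1 (mem_range.1 hk))]
  ring

lemma sum_inv_succ_sub (n : ℕ) : ∑ k ∈ range (n + 1), 1 / ((n : ℚ) + 1 - k) = H (n + 1) := by
  rw [H, ← sum_range_reflect]
  refine sum_congr rfl fun k hk => ?_
  rw [Nat.add_sub_cancel, Nat.cast_sub (Nat.lt_succ_iff.1 (mem_range.1 hk))]
  ring_nf

lemma sum_inv_succ_div_succ_sub (n : ℕ) :
    ∑ k ∈ range (n + 1), 1 / ((k : ℚ) + 1) / ((n : ℚ) + 1 - k) = 2 * H (n + 1) / ((n : ℚ) + 2) := by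
  have partial_fractions : ∀ k ∈ range (n + 1), 1 / ((k : ℚ) + 1) / ((n : ℚ) + 1 - k) =
      (1 / ((k : ℚ) + 1) + 1 / ((n : ℚ) + 1 - k)) / ((n : ℚ) + 2) := fun k hk => by
    have := cast_succ_sub_ne_zero (Nat.lt_succ_iff.1 (mem_range.1 hk))
    field_simp
    ring
  rw [sum_congr rfl partial_fractions, ← sum_div, sum_add_distrib, sum_inv_succ_sub, H]
  ring

lemma sum_inv_succ_mul_H_sub (n : ℕ) :
    ∑ k ∈ range (n + 1), 1 / ((k : ℚ) + 1) * H (n - k) = H (n + 1) ^ 2 - Hgen 2 (n + 1) := by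
  induction n with
  | zero => simp [H, Hgen]
  | succ n ih =>
    rw [sum_mul_H_succ_sub (fun k => 1 / ((k : ℚ) + 1)), ih, sum_inv_succ_div_succ_sub,
      H_succ (n + 1), Hgen_succ 2 (n + 1)]
    push_cast
    field_simp
    ring

lemma sum_H_div_succ_sub (n : ℕ) :
    ∑ k ∈ range (n + 1), H k / ((n : ℚ) + 1 - k) = H (n + 1) ^ 2 - Hgen 2 (n + 1) := by
  rw [← sum_inv_succ_mul_H_sub, ← sum_range_reflect]
  refine sum_congr rfl fun k hk => ?_
  have hk := Nat.lt_succ_iff.1 (mem_range.1 hk)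
  rw [Nat.add_sub_cancel, Nat.cast_sub hk]
  ring_nf

lemma sum_pow_four_mul_div_succ_sub (f : ℕ → ℚ) (n : ℕ) :
    ∑ k ∈ range (n + 1), (k : ℚ) ^ 4 * f k / ((n : ℚ) + 1 - k) =
      ((n : ℚ) + 1) ^ 4 * ∑ k ∈ range (n + 1), f k / ((n : ℚ) + 1 - k) -
        ∑ k ∈ range (n + 1),
          ((k : ℚ) ^ 3 + ((n : ℚ) + 1) * k ^ 2 + ((n : ℚ) + 1) ^ 2 * k + ((n : ℚ) + 1) ^ 3) * f k := by
  rw [mul_sum, ← sum_sub_distrib]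
  refine sum_congr rfl fun k hk => ?_
  have := cast_succ_sub_ne_zero (Nat.lt_succ_iff.1 (mem_range.1 hk))
  field_simp
  ring

theorem stmt7 (n : ℕ) :
    ∑ k ∈ Finset.range (n + 1), (k : ℚ) ^ 4 * H k * H (n - k) =
      ((n : ℚ) * ((n : ℚ) + 1) * (2 * (n : ℚ) + 1) * (3 * (n : ℚ) ^ 2 + 3 * (n : ℚ) - 1) / 30) *
          ((H (n + 1)) ^ 2 - Hgen 2 (n + 1))
        - (1 / 900) * (n : ℚ) * ((n : ℚ) + 1) * (447 * (n : ℚ) ^ 3 + 468 * (n : ℚ) ^ 2 + 17 * (n : ℚ) - 32) * H (n + 1)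
        + (1 / 54000) * (n : ℚ) * ((n : ℚ) + 1) *
            (20739 * (n : ℚ) ^ 3 + 33066 * (n : ℚ) ^ 2 + 4129 * (n : ℚ) - 3934) := by
  induction n with
  | zero => simp [H, Hgen]
  | succ n ih =>
    rw [sum_mul_H_succ_sub (fun k => (k : ℚ) ^ 4 * H k), ih, sum_pow_four_mul_div_succ_sub,
      sum_H_div_succ_sub]
    simp only [add_mul, sum_add_distrib, mul_assoc, ← mul_sum]
    rw [sum_H, sum_mul_H, sum_sq_mul_H, sum_cube_mul_H, H_succ (n + 1), Hgen_succ 2 (n + 1)]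
    push_cast
    field_simp
    ring
end

section
/- For every nonnegative integer n, ∑_{k=0}^{n} k²·H_{n-k}² = (n(n+1)(2n+1)/6)·H_{n+1}² − (1/18)(2n+1)(11n²+17n+3)·H_{n+1} + (1/108)(n+1)(170n²+109n+18). -/
/-!
Reversing the summation turns the left side into `∑_{j ≤ n} (n - j)² H_j²`. Expanding the square
reduces it to the moments `∑_{j < m} j^p H_j²` for `p = 0, 1, 2`, each of which has a closed form
in `m` and `H_m` that is checked by induction on `m`, using `H_{m+1} = H_m + 1/(m+1)`.
-/

open Finset

lemma sum_range_H_sq (m : ℕ) :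
    ∑ j ∈ range m, H j ^ 2 = m * H m ^ 2 - (2 * m + 1) * H m + 2 * m := by
  induction m with
  | zero => simp [H]
  | succ m ih =>
    rw [sum_range_succ, ih, H_succ]
    push_cast
    field_simp
    ring

lemma sum_range_mul_H_sq (m : ℕ) :
    ∑ j ∈ range m, (j : ℚ) * H j ^ 2 =
      ((m ^ 2 - m) / 2) * H m ^ 2 - ((m ^ 2 - m - 1) / 2) * H m + (m ^ 2 - 3 * m) / 4 := by
  induction m with
  | zero => simp [H]
  | succ m ih =>
    rw [sum_range_succ, ih, H_succ]
    push_cast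
    field_simp
    ring

lemma sum_range_sq_mul_H_sq (m : ℕ) :
    ∑ j ∈ range m, (j : ℚ) ^ 2 * H j ^ 2 =
      ((2 * m ^ 3 - 3 * m ^ 2 + m) / 6) * H m ^ 2
        - ((4 * m ^ 3 - 3 * m ^ 2 - m + 3) / 18) * H m
        + (8 * m ^ 3 - 15 * m ^ 2 + 25 * m) / 108 := by
  induction m with
  | zero => simp [H]
  | succ m ih =>
    rw [sum_range_succ, ih, H_succ]
    push_cast
    field_simp
    ring

lemma sum_range_sq_mul_H_sub_sq (n : ℕ) :
    ∑ k ∈ range (n + 1), (k : ℚ) ^ 2 * H (n - k) ^ 2 =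
      ∑ j ∈ range (n + 1), ((n : ℚ) - j) ^ 2 * H j ^ 2 := by
  rw [← sum_range_reflect]
  refine sum_congr rfl fun k hk => ?_
  have hkn : k ≤ n := Nat.lt_succ_iff.mp (mem_range.mp hk)
  rw [Nat.add_sub_cancel, Nat.sub_sub_self hkn, Nat.cast_sub hkn]

theorem stmt15 (n : ℕ) :
    ∑ k ∈ Finset.range (n + 1), (k : ℚ) ^ 2 * (H (n - k)) ^ 2 =
      ((n : ℚ) * ((n : ℚ) + 1) * (2 * (n : ℚ) + 1) / 6) * (H (n + 1)) ^ 2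
        - (1 / 18) * (2 * (n : ℚ) + 1) * (11 * (n : ℚ) ^ 2 + 17 * (n : ℚ) + 3) * H (n + 1)
        + (1 / 108) * ((n : ℚ) + 1) * (170 * (n : ℚ) ^ 2 + 109 * (n : ℚ) + 18) := by
  have expand : ∀ j ∈ range (n + 1), ((n : ℚ) - j) ^ 2 * H j ^ 2 =
      (n : ℚ) ^ 2 * H j ^ 2 - 2 * n * (j * H j ^ 2) + (j : ℚ) ^ 2 * H j ^ 2 :=
    fun _ _ => by ring
  rw [sum_range_sq_mul_H_sub_sq, sum_congr rfl expand, sum_add_distrib, sum_sub_distrib,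
    ← mul_sum, ← mul_sum, sum_range_H_sq, sum_range_mul_H_sq, sum_range_sq_mul_H_sq]
  push_cast
  ring
end
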